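/- Let 0 < γ < 1/2, let f(t) = 1/t + 1/(1-t), and let g₁,…,g_J : [γ,1-γ] → ℝ be convex and 1-Lipschitz. For λ ∈ [0,∞)^J, let p(λ) denote the unique minimizer over t ∈ [γ,1-γ] of the Lagrangian f(t) + Σⱼ λⱼ gⱼ(t) (which exists and is unique since the Lagrangian is strictly convex and continuous on the compact interval). Then for all λ, λ' ∈ [0,∞)^J, |p(λ) - p(λ')| ≤ (1/32)·‖λ - λ'‖₁. -/

import Mathlib

/-!
Each Lagrangian `L_λ = f + ∑ⱼ λⱼ gⱼ` is `32`-strongly convex on `[γ, 1-γ]`: the Jensen gaps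
of `1/t` and `1/(1-t)` at `u, v` and `w = a u + b v` add up to
`a b (u-v)² (1/(u v w) + 1/((1-u)(1-v)(1-w)))`, and the bracket is at least `16` because
`t (1-t) ≤ 1/4`. At a minimizer `x` of an `m`-strongly convex function `F` one has
`F y - F x ≥ (m/2) ‖y - x‖²`. Adding these inequalities for `L_λ` at `p(λ)` and `L_λ'` at `p(λ')`
gives `m ‖p(λ) - p(λ')‖² ≤ (L_λ - L_λ')(p(λ')) - (L_λ - L_λ')(p(λ))`, and
`L_λ - L_λ' = ∑ⱼ (λⱼ - λ'ⱼ) gⱼ` is `‖λ - λ'‖₁`-Lipschitz.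
-/

open Set Filter Topology
open scoped NNReal

section StrongConvexity

variable {E : Type*} [NormedAddCommGroup E] [NormedSpace ℝ E] {s : Set E} {φ : ℝ → ℝ}
  {m : ℝ} {f : E → ℝ}

lemma UniformConvexOn.subset {t : Set E} (hf : UniformConvexOn s φ f) (hts : t ⊆ s)
    (ht : Convex ℝ t) : UniformConvexOn t φ f :=
  ⟨ht, fun _ hx _ hy _ _ ha hb hab ↦ hf.2 (hts hx) (hts hy) ha hb hab⟩

lemma StrongConvexOn.add_convexOn {g : E → ℝ} (hf : StrongConvexOn s m f) (hg : ConvexOn ℝ s g) :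
    StrongConvexOn s m (f + g) := by
  have h := UniformConvexOn.add hf hg.uniformConvexOn_zero
  rwa [add_zero] at h

lemma UniformConvexOn.le_sub_of_isMinOn {x y : E} (hf : UniformConvexOn s φ f)
    (hmin : IsMinOn f s x) (hx : x ∈ s) (hy : y ∈ s) : φ ‖x - y‖ ≤ f y - f x := by
  -- compare `f x` with `f ((1 - θ) x + θ y)`, then let `θ → 0⁺`
  have key : ∀ θ ∈ Ioo (0 : ℝ) 1, (1 - θ) * φ ‖x - y‖ ≤ f y - f x := by
    rintro θ ⟨hθ₀, hθ₁⟩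
    have hconv := hf.2 hx hy (sub_nonneg.2 hθ₁.le) hθ₀.le (sub_add_cancel 1 θ)
    have hle := isMinOn_iff.1 hmin _
      (hf.1 hx hy (sub_nonneg.2 hθ₁.le) hθ₀.le (sub_add_cancel 1 θ))
    simp only [smul_eq_mul] at hconv
    refine le_of_mul_le_mul_left ?_ hθ₀
    linarith
  have hlim : Tendsto (fun θ : ℝ ↦ (1 - θ) * φ ‖x - y‖) (𝓝[>] 0) (𝓝 (φ ‖x - y‖)) := by
    have := ((continuous_const.sub continuous_id).mul continuous_const).tendsto 0
      (f := fun θ : ℝ ↦ (1 - θ) * φ ‖x - y‖)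
    simpa using this.mono_left nhdsWithin_le_nhds
  exact le_of_tendsto hlim (eventually_of_mem (Ioo_mem_nhdsGT one_pos) key)

lemma StrongConvexOn.mul_dist_le_of_isMinOn {K : ℝ≥0} {f₁ f₂ : E → ℝ} {x₁ x₂ : E}
    (hf₁ : StrongConvexOn s m f₁) (hf₂ : StrongConvexOn s m f₂)
    (hK : LipschitzOnWith K (f₁ - f₂) s) (hmin₁ : IsMinOn f₁ s x₁) (hmin₂ : IsMinOn f₂ s x₂)
    (hx₁ : x₁ ∈ s) (hx₂ : x₂ ∈ s) : m * dist x₁ x₂ ≤ K := by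
  have h₁ := UniformConvexOn.le_sub_of_isMinOn hf₁ hmin₁ hx₁ hx₂
  have h₂ := UniformConvexOn.le_sub_of_isMinOn hf₂ hmin₂ hx₂ hx₁
  have hlip : (f₁ - f₂) x₂ - (f₁ - f₂) x₁ ≤ K * dist x₂ x₁ :=
    (le_abs_self _).trans ((Real.dist_eq _ _).symm.trans_le (hK.dist_le_mul x₂ hx₂ x₁ hx₁))
  simp only [Pi.sub_apply, norm_sub_rev x₂, ← dist_eq_norm, dist_comm x₂] at h₁ h₂ hlip
  have hsq : m * dist x₁ x₂ * dist x₁ x₂ ≤ K * dist x₁ x₂ := by linarith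
  rcases (dist_nonneg (x := x₁) (y := x₂)).eq_or_lt with h | h
  · rw [← h, mul_zero]; exact K.2
  · exact le_of_mul_le_mul_right hsq h

end StrongConvexity

lemma ConvexOn.fun_sum {ι E : Type*} [AddCommGroup E] [Module ℝ E] {s : Set E} {t : Finset ι}
    {f : ι → E → ℝ} (hs : Convex ℝ s) (hf : ∀ i ∈ t, ConvexOn ℝ s (f i)) :
    ConvexOn ℝ s fun x ↦ ∑ i ∈ t, f i x := by
  simpa [Finset.sum_fn] using
    Finset.sum_induction f (ConvexOn ℝ s) (fun _ _ ↦ ConvexOn.add) (convexOn_const 0 hs) hf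

lemma LipschitzOnWith.sum_mul {α ι : Type*} [PseudoMetricSpace α] {s : Set α} (t : Finset ι)
    (c : ι → ℝ) {g : ι → α → ℝ} {K : ι → ℝ≥0} (hg : ∀ i ∈ t, LipschitzOnWith (K i) (g i) s) :
    LipschitzOnWith (∑ i ∈ t, ‖c i‖₊ * K i) (fun x ↦ ∑ i ∈ t, c i * g i x) s := by
  refine LipschitzOnWith.of_dist_le_mul fun x hx y hy ↦ ?_
  rw [Real.dist_eq, ← Finset.sum_sub_distrib]
  push_cast
  rw [Finset.sum_mul]
  refine (Finset.abs_sum_le_sum_abs _ _).trans (Finset.sum_le_sum fun i hi ↦ ?_)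
  rw [← mul_sub, abs_mul, mul_assoc, ← Real.dist_eq]
  exact mul_le_mul_of_nonneg_left ((hg i hi).dist_le_mul x hx y hy) (abs_nonneg _)

lemma one_div_jensen_gap {a b u v : ℝ} (hab : a + b = 1) (hu : u ≠ 0) (hv : v ≠ 0)
    (hw : a * u + b * v ≠ 0) :
    a * (1 / u) + b * (1 / v) - 1 / (a * u + b * v)
      = a * b * (u - v) ^ 2 / (u * v * (a * u + b * v)) := by
  obtain rfl := eq_sub_of_add_eq hab
  field_simp
  ring

lemma two_div_le_inv_add_inv {x y c : ℝ} (hx : 0 < x) (hy : 0 < y) (hc : 0 < c)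
    (hxy : x * y ≤ c ^ 2) : 2 / c ≤ x⁻¹ + y⁻¹ := by
  rw [inv_add_inv hx.ne' hy.ne', div_le_div_iff₀ hc (mul_pos hx hy)]
  nlinarith [sq_nonneg (x - y), mul_pos hx hy]

lemma prod_mul_prod_one_sub_le {u v w : ℝ} (hu : u ∈ Ioo 0 1) (hv : v ∈ Ioo 0 1)
    (hw : w ∈ Ioo 0 1) : u * v * w * ((1 - u) * (1 - v) * (1 - w)) ≤ (1 / 8) ^ 2 := by
  have hquarter (t : ℝ) : t * (1 - t) ≤ 1 / 4 := by nlinarith [sq_nonneg (2 * t - 1)]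
  have hpos {t : ℝ} (ht : t ∈ Ioo 0 1) : 0 ≤ t * (1 - t) :=
    mul_nonneg ht.1.le (sub_nonneg.2 ht.2.le)
  calc u * v * w * ((1 - u) * (1 - v) * (1 - w))
      = (u * (1 - u)) * (v * (1 - v)) * (w * (1 - w)) := by ring
    _ ≤ (1 / 4) * (1 / 4) * (1 / 4) := by
      have := hpos hu; have := hpos hv; have := hpos hw
      gcongr <;> exact hquarter _
    _ = (1 / 8) ^ 2 := by norm_num

noncomputable def varianceSurrogate (t : ℝ) : ℝ := 1 / t + 1 / (1 - t)

lemma strongConvexOn_varianceSurrogate : StrongConvexOn (Ioo 0 1) 32 varianceSurrogate := by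
  refine ⟨convex_Ioo 0 1, fun u hu v hv a b ha hb hab ↦ ?_⟩
  have hw := convex_Ioo (0 : ℝ) 1 hu hv ha hb hab
  simp only [smul_eq_mul, mem_Ioo, varianceSurrogate, Real.norm_eq_abs, sq_abs] at hu hv hw ⊢
  obtain ⟨hu₀, hu₁⟩ := hu
  obtain ⟨hv₀, hv₁⟩ := hv
  have hu₁' : 0 < 1 - u := sub_pos.2 hu₁
  have hv₁' : 0 < 1 - v := sub_pos.2 hv₁
  have hw₁ : 0 < 1 - (a * u + b * v) := sub_pos.2 hw.2
  have hw' : 1 - (a * u + b * v) = a * (1 - u) + b * (1 - v) := by linear_combination -hab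
  have gap₀ := one_div_jensen_gap hab hu₀.ne' hv₀.ne' hw.1.ne'
  have gap₁ := one_div_jensen_gap hab hu₁'.ne' hv₁'.ne' (hw' ▸ hw₁.ne')
  rw [← hw', show (1 - u - (1 - v)) ^ 2 = (u - v) ^ 2 by ring] at gap₁
  generalize a * u + b * v = w at *
  have h16 : 16 ≤ (u * v * w)⁻¹ + ((1 - u) * (1 - v) * (1 - w))⁻¹ := by
    have := two_div_le_inv_add_inv (mul_pos (mul_pos hu₀ hv₀) hw.1)
      (mul_pos (mul_pos hu₁' hv₁') hw₁) (by norm_num)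
      (prod_mul_prod_one_sub_le ⟨hu₀, hu₁⟩ ⟨hv₀, hv₁⟩ ⟨hw.1, hw.2⟩)
    rwa [show (2 : ℝ) / (1 / 8) = 16 by norm_num] at this
  have hab₀ : 0 ≤ a * b * (u - v) ^ 2 := by positivity
  simp only [div_eq_mul_inv, one_mul] at gap₀ gap₁ ⊢
  linarith [mul_le_mul_of_nonneg_left h16 hab₀]

noncomputable def lagrangian {ι : Type*} [Fintype ι] (g : ι → ℝ → ℝ) (μ : ι → ℝ) (t : ℝ) : ℝ :=
  varianceSurrogate t + ∑ j, μ j * g j t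

section Lagrangian

variable {ι : Type*} [Fintype ι] {g : ι → ℝ → ℝ} {s : Set ℝ}

lemma strongConvexOn_lagrangian (hs : s ⊆ Ioo 0 1) (hs_cvx : Convex ℝ s)
    (hg : ∀ j, ConvexOn ℝ s (g j)) {μ : ι → ℝ} (hμ : ∀ j, 0 ≤ μ j) :
    StrongConvexOn s 32 (lagrangian g μ) :=
  StrongConvexOn.add_convexOn (strongConvexOn_varianceSurrogate.subset hs hs_cvx)
    (ConvexOn.fun_sum hs_cvx fun j _ ↦ (hg j).smul (hμ j))

lemma lipschitzOnWith_lagrangian_sub (hg : ∀ j, LipschitzOnWith 1 (g j) s) (μ ν : ι → ℝ) :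
    LipschitzOnWith (∑ j, ‖μ j - ν j‖₊) (lagrangian g μ - lagrangian g ν) s := by
  have hsub : lagrangian g μ - lagrangian g ν = fun t ↦ ∑ j, (μ - ν) j * g j t := by
    funext t
    simp only [lagrangian, Pi.sub_apply, sub_mul, Finset.sum_sub_distrib]
    ring
  simpa [hsub] using LipschitzOnWith.sum_mul Finset.univ (μ - ν) fun j _ ↦ hg j

end Lagrangian

theorem lagrangian_minimizer_lipschitz_in_duals_general
    (γ : ℝ) (hγ0 : 0 < γ) (J : ℕ)
    (g : Fin J → ℝ → ℝ)
    (hg_cvx : ∀ j, ConvexOn ℝ (Set.Icc γ (1 - γ)) (g j))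
    (hg_lip : ∀ j, LipschitzOnWith 1 (g j) (Set.Icc γ (1 - γ)))
    (p : (Fin J → ℝ) → ℝ)
    (hp_mem : ∀ lam : Fin J → ℝ, (∀ j, 0 ≤ lam j) → p lam ∈ Set.Icc γ (1 - γ))
    (hp_min : ∀ lam : Fin J → ℝ, (∀ j, 0 ≤ lam j) → ∀ t ∈ Set.Icc γ (1 - γ),
      (1 / p lam + 1 / (1 - p lam)) + ∑ j, lam j * g j (p lam)
        ≤ (1 / t + 1 / (1 - t)) + ∑ j, lam j * g j t)
    (lam lam' : Fin J → ℝ) (hlam : ∀ j, 0 ≤ lam j) (hlam' : ∀ j, 0 ≤ lam' j) :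
    |p lam - p lam'| ≤ (1 / 32) * ∑ j, |lam j - lam' j| := by
  have hs : Icc γ (1 - γ) ⊆ Ioo 0 1 := fun t ht ↦ ⟨hγ0.trans_le ht.1, by linarith [ht.2]⟩
  have h := StrongConvexOn.mul_dist_le_of_isMinOn
    (strongConvexOn_lagrangian hs (convex_Icc _ _) hg_cvx hlam)
    (strongConvexOn_lagrangian hs (convex_Icc _ _) hg_cvx hlam')
    (lipschitzOnWith_lagrangian_sub hg_lip lam lam')
    (isMinOn_iff.2 (hp_min lam hlam)) (isMinOn_iff.2 (hp_min lam' hlam'))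
    (hp_mem lam hlam) (hp_mem lam' hlam')
  rw [Real.dist_eq] at h
  push_cast [coe_nnnorm, Real.norm_eq_abs] at h
  linarith

/-- Lipschitz dependence of the Lagrangian minimizer on the dual variables:
if `p(λ)` is the unique minimizer over `[γ,1-γ]` of
`t ↦ 1/t + 1/(1-t) + ∑ⱼ λⱼ gⱼ(t)` (with each `gⱼ` convex and 1-Lipschitz), then
`|p(λ) - p(λ')| ≤ (1/32)·‖λ - λ'‖₁` for all `λ, λ' ≥ 0`. -/
theorem lagrangian_minimizer_lipschitz_in_duals
    (γ : ℝ) (hγ0 : 0 < γ) (hγ : γ < 1 / 2) (J : ℕ)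
    (g : Fin J → ℝ → ℝ)
    (hg_cvx : ∀ j, ConvexOn ℝ (Set.Icc γ (1 - γ)) (g j))
    (hg_lip : ∀ j, LipschitzOnWith 1 (g j) (Set.Icc γ (1 - γ)))
    (p : (Fin J → ℝ) → ℝ)
    (hp_mem : ∀ lam : Fin J → ℝ, (∀ j, 0 ≤ lam j) → p lam ∈ Set.Icc γ (1 - γ))
    (hp_min : ∀ lam : Fin J → ℝ, (∀ j, 0 ≤ lam j) → ∀ t ∈ Set.Icc γ (1 - γ),
      (1 / p lam + 1 / (1 - p lam)) + ∑ j, lam j * g j (p lam)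
        ≤ (1 / t + 1 / (1 - t)) + ∑ j, lam j * g j t)
    (hp_unique : ∀ lam : Fin J → ℝ, (∀ j, 0 ≤ lam j) → ∀ t ∈ Set.Icc γ (1 - γ),
      (1 / t + 1 / (1 - t)) + ∑ j, lam j * g j t
        = (1 / p lam + 1 / (1 - p lam)) + ∑ j, lam j * g j (p lam) → t = p lam)
    (lam lam' : Fin J → ℝ) (hlam : ∀ j, 0 ≤ lam j) (hlam' : ∀ j, 0 ≤ lam' j) :
    |p lam - p lam'| ≤ (1 / 32) * ∑ j, |lam j - lam' j| :=
  lagrangian_minimizer_lipschitz_in_duals_general γ hγ0 J g hg_cvx hg_lip p hp_mem hp_min lam lam'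
    hlam hlam'
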